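/- arXiv:2409.14359 — 2 statements merged into one kernel-verified Lean document; each statement's English description precedes it below -/
import Mathlib

section
/- Let 𝔉 be a maximal commuting family of i-boxes in [a,b]. (i) If [x,y] ∈ 𝔉 has effective end y, then there exists a unique y' ≤ y such that [x,y'] ∈ 𝔉 and either [x,y'] is in the left corner or x = y'. (ii) If [x,y] ∈ 𝔉 has effective end x, then there exists a unique x' ≥ x such that [x',y] ∈ 𝔉 and either [x',y] is in the right corner or x' = y. -/
namespace IBoxes

variable {I : Type*}

/-- `gapBelow i x m` encodes `x₋ < m` : no position `t` with `m ≤ t < x` has the color of `x`. -/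
def gapBelow (i : ℤ → I) (x m : ℤ) : Prop := ∀ t : ℤ, m ≤ t → t < x → i t ≠ i x

/-- `gapAbove i y m` encodes `m < y₊` : no position `t` with `y < t ≤ m` has the color of `y`. -/
def gapAbove (i : ℤ → I) (y m : ℤ) : Prop := ∀ t : ℤ, y < t → t ≤ m → i t ≠ i y

/-- `[x,y]` is an `i`-box. -/
def IsBox (i : ℤ → I) (x y : ℤ) : Prop := x ≤ y ∧ i x = i y

/-- Two `i`-boxes commute: `(x₁)₋ < x₂ ≤ y₂ < (y₁)₊` or `(x₂)₋ < x₁ ≤ y₁ < (y₂)₊`. -/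
def BoxCommute (i : ℤ → I) (x₁ y₁ x₂ y₂ : ℤ) : Prop :=
  (gapBelow i x₁ x₂ ∧ gapAbove i y₁ y₂) ∨ (gapBelow i x₂ x₁ ∧ gapAbove i y₂ y₁)

/-- A commuting family of `i`-boxes. -/
def CommFamily (i : ℤ → I) (F : Set (ℤ × ℤ)) : Prop :=
  (∀ p ∈ F, IsBox i p.1 p.2) ∧ ∀ p ∈ F, ∀ q ∈ F, BoxCommute i p.1 p.2 q.1 q.2

/-- All boxes of the family lie in `[a,b]`. -/
def InRange (a b : ℤ) (F : Set (ℤ × ℤ)) : Prop := ∀ p ∈ F, a ≤ p.1 ∧ p.2 ≤ b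

/-- A maximal commuting family of `i`-boxes in `[a,b]`. -/
def MaxCommFamily (i : ℤ → I) (a b : ℤ) (F : Set (ℤ × ℤ)) : Prop :=
  CommFamily i F ∧ InRange a b F ∧
    ∀ G : Set (ℤ × ℤ), CommFamily i G → InRange a b G → F ⊆ G → F = G

/-- `x' = x₊`, the next position with the color of `x`. -/
def NextSame (i : ℤ → I) (x x' : ℤ) : Prop :=
  x < x' ∧ i x' = i x ∧ ∀ t : ℤ, x < t → t < x' → i t ≠ i x

/-- `y' = y₋`, the previous position with the color of `y`. -/
def PrevSame (i : ℤ → I) (y y' : ℤ) : Prop :=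
  y' < y ∧ i y' = i y ∧ ∀ t : ℤ, y' < t → t < y → i t ≠ i y

/-- `p` is frozen in `[a,b]` : `(p.1)₋ < a` and `b < (p.2)₊`. -/
def Frozen (i : ℤ → I) (a b : ℤ) (p : ℤ × ℤ) : Prop :=
  gapBelow i p.1 a ∧ gapAbove i p.2 b

/-- `p = [lo, hi}`, i.e. `p = [lo, hi(i lo)⁻]`. -/
def IsLBox (i : ℤ → I) (lo hi : ℤ) (p : ℤ × ℤ) : Prop :=
  p.1 = lo ∧ lo ≤ p.2 ∧ p.2 ≤ hi ∧ i p.2 = i lo ∧ ∀ t : ℤ, p.2 < t → t ≤ hi → i t ≠ i lo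

/-- `p = {lo, hi]`, i.e. `p = [lo(i hi)⁺, hi]`. -/
def IsRBox (i : ℤ → I) (lo hi : ℤ) (p : ℤ × ℤ) : Prop :=
  p.2 = hi ∧ lo ≤ p.1 ∧ p.1 ≤ hi ∧ i p.1 = i hi ∧ ∀ t : ℤ, lo ≤ t → t < p.1 → i t ≠ i hi

/-- An admissible chain of `i`-boxes `𝔠_k = box k` (for `1 ≤ k ≤ l`) with envelopes
`𝔠̃_k = [lo k, hi k]`. -/
structure AdmissibleChain (i : ℤ → I) (l : ℕ) where
  lo : ℕ → ℤ
  hi : ℕ → ℤ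
  box : ℕ → ℤ × ℤ
  size : ∀ k : ℕ, 1 ≤ k → k ≤ l → hi k = lo k + (k : ℤ) - 1
  step : ∀ k : ℕ, 1 ≤ k → k < l →
    (lo (k + 1) = lo k - 1 ∧ hi (k + 1) = hi k) ∨
    (lo (k + 1) = lo k ∧ hi (k + 1) = hi k + 1)
  box_spec : ∀ k : ℕ, 1 ≤ k → k ≤ l →
    IsLBox i (lo k) (hi k) (box k) ∨ IsRBox i (lo k) (hi k) (box k)
  cover : ∀ k : ℕ, 1 ≤ k → k ≤ l →
    Set.Icc (lo k) (hi k) = ⋃ j ∈ Set.Icc 1 k, Set.Icc ((box j).1) ((box j).2)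

/-- The set of boxes appearing in an admissible chain. -/
def boxesOf {i : ℤ → I} {l : ℕ} (C : AdmissibleChain i l) : Set (ℤ × ℤ) :=
  {p | ∃ k : ℕ, 1 ≤ k ∧ k ≤ l ∧ C.box k = p}

/-- The envelope `𝔠̃_k` as a set, with `𝔠̃_0 = ∅`. -/
def env {i : ℤ → I} {l : ℕ} (C : AdmissibleChain i l) (k : ℕ) : Set ℤ :=
  if k = 0 then ∅ else Set.Icc (C.lo k) (C.hi k)

/-- `z` is the effective end of the box `(x,y)` of the maximal commuting family `F` in `[a,b]`. -/
def IsEffectiveEnd (i : ℤ → I) (a b : ℤ) (F : Set (ℤ × ℤ)) (x y z : ℤ) : Prop :=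
  z ∈ ({x, y} : Set ℤ) ∧
    ∀ (l : ℕ) (C : AdmissibleChain i l), C.lo l = a → C.hi l = b → boxesOf C = F →
      ∀ k : ℕ, 1 ≤ k → k ≤ l → C.box k = (x, y) →
        ({z} : Set ℤ) = env C k \ env C (k - 1)

/-- `[x,y]` is in the left corner of `F`: `[x₊,y] ∈ F` and `[x,y₊] ∈ F`. -/
def LeftCorner (i : ℤ → I) (F : Set (ℤ × ℤ)) (x y : ℤ) : Prop :=
  (∃ x', NextSame i x x' ∧ (x', y) ∈ F) ∧ (∃ y', NextSame i y y' ∧ (x, y') ∈ F)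

/-- `[x,y]` is in the right corner of `F`: `[x,y₋] ∈ F` and `[x₋,y] ∈ F`. -/
def RightCorner (i : ℤ → I) (F : Set (ℤ × ℤ)) (x y : ℤ) : Prop :=
  (∃ y', PrevSame i y y' ∧ (x, y') ∈ F) ∧ (∃ x', PrevSame i x x' ∧ (x', y) ∈ F)

/-- The number of positions of color `j` in `[x,y]`. -/
noncomputable def colorCount (i : ℤ → I) (j : I) (x y : ℤ) : ℕ :=
  {s : ℤ | x ≤ s ∧ s ≤ y ∧ i s = j}.ncard


section Aux

variable {i : ℤ → I}

lemma gapBelow_vac {x m : ℤ} (h : x ≤ m) : gapBelow i x m :=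
  fun t ht ht' _ => absurd (lt_of_le_of_lt (le_trans h ht) ht') (lt_irrefl x)

lemma gapAbove_vac {y m : ℤ} (h : m ≤ y) : gapAbove i y m :=
  fun t ht ht' _ => absurd (lt_of_lt_of_le ht (le_trans ht' h)) (lt_irrefl y)

lemma boxCommute_self (x y : ℤ) : BoxCommute i x y x y :=
  Or.inl ⟨gapBelow_vac le_rfl, gapAbove_vac le_rfl⟩

lemma exists_least (P : ℤ → Prop) (c : ℤ) (hc : ∀ z, P z → c ≤ z) (hne : ∃ z, P z) :
    ∃ m, P m ∧ ∀ z, P z → m ≤ z := by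
  classical exact Int.exists_least_of_bdd ⟨c, hc⟩ hne

lemma exists_greatest (P : ℤ → Prop) (c : ℤ) (hc : ∀ z, P z → z ≤ c) (hne : ∃ z, P z) :
    ∃ m, P m ∧ ∀ z, P z → z ≤ m := by
  classical exact Int.exists_greatest_of_bdd ⟨c, hc⟩ hne

lemma mem_of_commutes {a b : ℤ} {F : Set (ℤ × ℤ)} (hF : MaxCommFamily i a b F)
    {p : ℤ × ℤ} (hbox : IsBox i p.1 p.2) (hlo : a ≤ p.1) (hhi : p.2 ≤ b)
    (hcomm : ∀ q ∈ F, BoxCommute i p.1 p.2 q.1 q.2) : p ∈ F := by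
  have hcf : CommFamily i (F ∪ {p}) := by
    constructor
    · intro q hq
      rcases hq with hq | hq
      · exact hF.1.1 q hq
      · rw [Set.mem_singleton_iff] at hq; subst hq; exact hbox
    · intro q hq r hr
      rcases hq with hq | hq <;> rcases hr with hr | hr
      · exact hF.1.2 q hq r hr
      · rw [Set.mem_singleton_iff] at hr; subst hr; exact (hcomm q hq).symm
      · rw [Set.mem_singleton_iff] at hq; subst hq; exact hcomm r hr
      · rw [Set.mem_singleton_iff] at hq; rw [Set.mem_singleton_iff] at hr
        subst hq; subst hr; exact boxCommute_self _ _
  have hrange : InRange a b (F ∪ {p}) := by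
    intro q hq
    rcases hq with hq | hq
    · exact hF.2.1 q hq
    · rw [Set.mem_singleton_iff] at hq; subst hq; exact ⟨hlo, hhi⟩
  have hEq := hF.2.2 (F ∪ {p}) hcf hrange Set.subset_union_left
  rw [hEq]
  exact Set.mem_union_right _ rfl

lemma pL_commutes {a b yL : ℤ} (ha : a ≤ yL) (h3 : i yL = i a)
    (hmax : ∀ t, a ≤ t → t ≤ b → i t = i a → t ≤ yL)
    {u v : ℤ} (hu : a ≤ u) (hv : v ≤ b) : BoxCommute i a yL u v := by
  refine Or.inl ⟨gapBelow_vac hu, fun t ht1 ht2 heq => ?_⟩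
  have : t ≤ yL := hmax t (le_trans ha (le_of_lt ht1)) (le_trans ht2 hv) (by rw [heq, h3])
  omega

lemma pR_commutes {a b xR : ℤ} (h2 : xR ≤ b) (h3 : i xR = i b)
    (hmin : ∀ t, a ≤ t → t ≤ b → i t = i b → xR ≤ t)
    {u v : ℤ} (hu : a ≤ u) (hv : v ≤ b) : BoxCommute i xR b u v := by
  refine Or.inl ⟨fun t ht1 ht2 heq => ?_, gapAbove_vac hv⟩
  have : xR ≤ t := hmin t (le_trans hu ht1) (by omega) (by rw [heq, h3])
  omega

lemma pL_spec {a b : ℤ} {F : Set (ℤ × ℤ)} (hab : a ≤ b) (hF : MaxCommFamily i a b F) :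
    ∃ yL, a ≤ yL ∧ yL ≤ b ∧ i yL = i a ∧ (∀ t, a ≤ t → t ≤ b → i t = i a → t ≤ yL) ∧
      (a, yL) ∈ F := by
  obtain ⟨yL, ⟨h1, h2, h3⟩, hmax'⟩ := exists_greatest (fun t => a ≤ t ∧ t ≤ b ∧ i t = i a) b
    (fun z hz => hz.2.1) ⟨a, le_rfl, hab, rfl⟩
  have hmax : ∀ t, a ≤ t → t ≤ b → i t = i a → t ≤ yL := fun t u v w => hmax' t ⟨u, v, w⟩
  refine ⟨yL, h1, h2, h3, hmax, ?_⟩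
  refine mem_of_commutes hF ⟨h1, h3.symm⟩ le_rfl h2 ?_
  intro q hq
  exact pL_commutes h1 h3 hmax (hF.2.1 q hq).1 (hF.2.1 q hq).2

lemma pR_spec {a b : ℤ} {F : Set (ℤ × ℤ)} (hab : a ≤ b) (hF : MaxCommFamily i a b F) :
    ∃ xR, a ≤ xR ∧ xR ≤ b ∧ i xR = i b ∧ (∀ t, a ≤ t → t ≤ b → i t = i b → xR ≤ t) ∧
      (xR, b) ∈ F := by
  obtain ⟨xR, ⟨h1, h2, h3⟩, hmin'⟩ := exists_least (fun t => a ≤ t ∧ t ≤ b ∧ i t = i b) a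
    (fun z hz => hz.1) ⟨b, hab, le_rfl, rfl⟩
  have hmin : ∀ t, a ≤ t → t ≤ b → i t = i b → xR ≤ t := fun t u v w => hmin' t ⟨u, v, w⟩
  refine ⟨xR, h1, h2, h3, hmin, ?_⟩
  refine mem_of_commutes hF ⟨h2, h3⟩ h1 le_rfl ?_
  intro q hq
  exact pR_commutes h2 h3 hmin (hF.2.1 q hq).1 (hF.2.1 q hq).2

end Aux

section Peel

variable {i : ℤ → I}

lemma side_cases {a b : ℤ} {F : Set (ℤ × ℤ)} (hF : MaxCommFamily i a b F)
    {yL xR : ℤ}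
    (hyL3 : i yL = i a) (hymax : ∀ t, a ≤ t → t ≤ b → i t = i a → t ≤ yL)
    (hxR3 : i xR = i b) (hxmin : ∀ t, a ≤ t → t ≤ b → i t = i b → xR ≤ t)
    (hyLb : yL ≤ b) (haxR : a ≤ xR) :
    (∀ r ∈ F, r.2 = b → r = (xR, b)) ∨ (∀ r ∈ F, r.1 = a → r = (a, yL)) := by
  by_contra h
  push_neg at h
  obtain ⟨⟨r1, hr1, hr1b, hr1ne⟩, ⟨r2, hr2, hr2a, hr2ne⟩⟩ := h
  have hbox1 := hF.1.1 r1 hr1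
  have hbox2 := hF.1.2 r2 hr2 r1 hr1
  have hb2 := hF.1.1 r2 hr2
  have hrange1 := hF.2.1 r1 hr1
  have hrange2 := hF.2.1 r2 hr2
  -- r1 = (u', b) with u' > xR
  have hu' : xR < r1.1 := by
    have hle : xR ≤ r1.1 := hxmin r1.1 hrange1.1 (by rw [← hr1b]; exact hbox1.1) (by rw [← hr1b]; exact hbox1.2)
    rcases lt_or_eq_of_le hle with h | h
    · exact h
    · exfalso; apply hr1ne; exact Prod.ext h.symm hr1b
  have hv' : r2.2 < yL := by
    have hle : r2.2 ≤ yL := hymax r2.2 (by rw [← hr2a]; exact hb2.1) hrange2.2 (by rw [← hr2a]; exact hb2.2.symm)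
    rcases lt_or_eq_of_le hle with h | h
    · exact h
    · exfalso; apply hr2ne; exact Prod.ext hr2a h
  -- BoxCommute i r2.1 r2.2 r1.1 r1.2, i.e. i a v' u' b
  rcases hbox2 with ⟨_, h2⟩ | ⟨h1, _⟩
  · -- gapAbove i r2.2 r1.2 : fails at yL
    exact h2 yL hv' (by rw [hr1b]; exact hyLb) (by rw [hyL3, ← hr2a]; exact hb2.2)
  · -- gapBelow i r1.1 r2.1 : fails at xR
    exact h1 xR (by rw [hr2a]; exact haxR) hu' (by rw [hxR3, ← hr1b]; exact hbox1.2.symm)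

lemma peelA {a b : ℤ} {F : Set (ℤ × ℤ)} {xR : ℤ} (hab : a < b) (hF : MaxCommFamily i a b F)
    (h2 : xR ≤ b) (h3 : i xR = i b)
    (hmin : ∀ t, a ≤ t → t ≤ b → i t = i b → xR ≤ t)
    (hmem : (xR, b) ∈ F)
    (huniq : ∀ r ∈ F, r.2 = b → r = (xR, b)) :
    MaxCommFamily i a (b - 1) (F \ {(xR, b)}) := by
  refine ⟨⟨fun p hp => hF.1.1 p hp.1, fun p hp q hq => hF.1.2 p hp.1 q hq.1⟩, ?_, ?_⟩
  · intro p hp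
    refine ⟨(hF.2.1 p hp.1).1, ?_⟩
    have hpb : p.2 ≤ b := (hF.2.1 p hp.1).2
    have hne : p.2 ≠ b := by
      intro h
      exact hp.2 (by rw [Set.mem_singleton_iff]; exact huniq p hp.1 h)
    omega
  · intro G hG hGrange hsub
    have hGc : CommFamily i (G ∪ {(xR, b)}) := by
      constructor
      · intro q hq
        rcases hq with hq | hq
        · exact hG.1 q hq
        · rw [Set.mem_singleton_iff] at hq; subst hq; exact ⟨h2, h3⟩
      · intro q hq r hr
        rcases hq with hq | hq <;> rcases hr with hr | hr
        · exact hG.2 q hq r hr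
        · rw [Set.mem_singleton_iff] at hr; subst hr
          exact (pR_commutes h2 h3 hmin (hGrange q hq).1 (le_trans (hGrange q hq).2 (by omega))).symm
        · rw [Set.mem_singleton_iff] at hq; subst hq
          exact pR_commutes h2 h3 hmin (hGrange r hr).1 (le_trans (hGrange r hr).2 (by omega))
        · rw [Set.mem_singleton_iff] at hq; rw [Set.mem_singleton_iff] at hr
          subst hq; subst hr; exact boxCommute_self _ _
    have hGr : InRange a b (G ∪ {(xR, b)}) := by
      intro q hq
      rcases hq with hq | hq
      · exact ⟨(hGrange q hq).1, le_trans (hGrange q hq).2 (by omega)⟩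
      · rw [Set.mem_singleton_iff] at hq; subst hq
        exact ⟨le_trans (hF.2.1 _ hmem).1 le_rfl, le_rfl⟩
    have hFG : F ⊆ G ∪ {(xR, b)} := by
      intro r hr
      by_cases h : r = (xR, b)
      · exact Set.mem_union_right _ (by rw [Set.mem_singleton_iff]; exact h)
      · exact Set.mem_union_left _ (hsub ⟨hr, by rw [Set.mem_singleton_iff]; exact h⟩)
    have hEq := hF.2.2 (G ∪ {(xR, b)}) hGc hGr hFG
    apply Set.Subset.antisymm hsub
    intro g hg
    have hgF : g ∈ F := by rw [hEq]; exact Set.mem_union_left _ hg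
    refine ⟨hgF, ?_⟩
    rw [Set.mem_singleton_iff]
    intro h
    have := (hGrange g hg).2
    rw [h] at this
    omega

lemma peelB {a b : ℤ} {F : Set (ℤ × ℤ)} {yL : ℤ} (hab : a < b) (hF : MaxCommFamily i a b F)
    (h1 : a ≤ yL) (h3 : i yL = i a)
    (hmax : ∀ t, a ≤ t → t ≤ b → i t = i a → t ≤ yL)
    (hmem : (a, yL) ∈ F)
    (huniq : ∀ r ∈ F, r.1 = a → r = (a, yL)) :
    MaxCommFamily i (a + 1) b (F \ {(a, yL)}) := by
  refine ⟨⟨fun p hp => hF.1.1 p hp.1, fun p hp q hq => hF.1.2 p hp.1 q hq.1⟩, ?_, ?_⟩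
  · intro p hp
    refine ⟨?_, (hF.2.1 p hp.1).2⟩
    have hpa : a ≤ p.1 := (hF.2.1 p hp.1).1
    have hne : p.1 ≠ a := by
      intro h
      exact hp.2 (by rw [Set.mem_singleton_iff]; exact huniq p hp.1 h)
    omega
  · intro G hG hGrange hsub
    have hGc : CommFamily i (G ∪ {(a, yL)}) := by
      constructor
      · intro q hq
        rcases hq with hq | hq
        · exact hG.1 q hq
        · rw [Set.mem_singleton_iff] at hq; subst hq; exact ⟨h1, h3.symm⟩
      · intro q hq r hr
        rcases hq with hq | hq <;> rcases hr with hr | hr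
        · exact hG.2 q hq r hr
        · rw [Set.mem_singleton_iff] at hr; subst hr
          exact (pL_commutes h1 h3 hmax (le_trans (by omega) (hGrange q hq).1) (hGrange q hq).2).symm
        · rw [Set.mem_singleton_iff] at hq; subst hq
          exact pL_commutes h1 h3 hmax (le_trans (by omega) (hGrange r hr).1) (hGrange r hr).2
        · rw [Set.mem_singleton_iff] at hq; rw [Set.mem_singleton_iff] at hr
          subst hq; subst hr; exact boxCommute_self _ _
    have hGr : InRange a b (G ∪ {(a, yL)}) := by
      intro q hq
      rcases hq with hq | hq
      · exact ⟨le_trans (by omega) (hGrange q hq).1, (hGrange q hq).2⟩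
      · rw [Set.mem_singleton_iff] at hq; subst hq
        exact ⟨le_rfl, (hF.2.1 _ hmem).2⟩
    have hFG : F ⊆ G ∪ {(a, yL)} := by
      intro r hr
      by_cases h : r = (a, yL)
      · exact Set.mem_union_right _ (by rw [Set.mem_singleton_iff]; exact h)
      · exact Set.mem_union_left _ (hsub ⟨hr, by rw [Set.mem_singleton_iff]; exact h⟩)
    have hEq := hF.2.2 (G ∪ {(a, yL)}) hGc hGr hFG
    apply Set.Subset.antisymm hsub
    intro g hg
    have hgF : g ∈ F := by rw [hEq]; exact Set.mem_union_left _ hg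
    refine ⟨hgF, ?_⟩
    rw [Set.mem_singleton_iff]
    intro h
    have := (hGrange g hg).1
    rw [h] at this
    omega

lemma base_family {a : ℤ} {F : Set (ℤ × ℤ)} (hF : MaxCommFamily i a a F) :
    F = {(a, a)} := by
  obtain ⟨yL, h1, h2, _, _, hmem⟩ := pL_spec le_rfl hF
  have hya : yL = a := le_antisymm h2 h1
  rw [hya] at hmem
  ext p
  rw [Set.mem_singleton_iff]
  constructor
  · intro hp
    have hr := hF.2.1 p hp
    have hb := hF.1.1 p hp
    have e1 : p.1 = a := le_antisymm (le_trans hb.1 hr.2) hr.1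
    have e2 : p.2 = a := le_antisymm hr.2 (le_trans hr.1 hb.1)
    exact Prod.ext e1 e2
  · intro hp; subst hp; exact hmem

end Peel

section Chain

variable {i : ℤ → I}

lemma exists_chain : ∀ (n : ℕ) (a b : ℤ) (F : Set (ℤ × ℤ)), b = a + n →
    MaxCommFamily i a b F →
    ∃ C : AdmissibleChain i (n + 1), C.lo (n + 1) = a ∧ C.hi (n + 1) = b ∧ boxesOf C = F := by
  intro n
  induction n with
  | zero =>
    intro a b F hb hF
    have hba : b = a := by simpa using hb
    subst hba
    refine ⟨⟨fun _ => b, fun _ => b, fun _ => (b, b), ?_, ?_, ?_, ?_⟩, rfl, rfl, ?_⟩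
    · intro k h1 h2
      have hk : k = 1 := le_antisymm h2 h1
      subst hk; push_cast; ring
    · intro k h1 h2; omega
    · intro k _ _
      exact Or.inl ⟨rfl, le_rfl, le_rfl, rfl,
        fun t ht1 ht2 => absurd (lt_of_le_of_lt ht2 ht1) (lt_irrefl t)⟩
    · intro k h1 h2
      have hk : k = 1 := le_antisymm h2 h1
      subst hk
      ext τ
      simp
    · rw [base_family hF]
      ext p
      simp only [boxesOf, Set.mem_setOf_eq, Set.mem_singleton_iff]
      constructor
      · rintro ⟨k, _, _, rfl⟩; rfl
      · intro hp; exact ⟨1, le_rfl, le_rfl, hp.symm⟩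
  | succ n IH =>
    intro a b F hb hF
    have hab : a < b := by omega
    obtain ⟨yL, hy1, hy2, hy3, hymax, hyL⟩ := pL_spec (le_of_lt hab) hF
    obtain ⟨xR, hx1, hx2, hx3, hxmin, hxR⟩ := pR_spec (le_of_lt hab) hF
    rcases side_cases hF hy3 hymax hx3 hxmin hy2 hx1 with hA | hB
    · -- peel the R-box (xR, b)
      have hF' := peelA hab hF hx2 hx3 hxmin hxR hA
      obtain ⟨C', hlo', hhi', hbox'⟩ := IH a (b - 1) (F \ {(xR, b)}) (by omega) hF'
      refine ⟨⟨Function.update C'.lo (n + 2) a,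
               Function.update C'.hi (n + 2) b,
               Function.update C'.box (n + 2) (xR, b), ?_, ?_, ?_, ?_⟩, ?_, ?_, ?_⟩
      · intro k h1 h2
        by_cases hk : k = n + 2
        · subst hk; rw [Function.update_self, Function.update_self]; push_cast; omega
        · rw [Function.update_of_ne hk, Function.update_of_ne hk]; exact C'.size k h1 (by omega)
      · intro k h1 h2
        by_cases hk : k = n + 1
        · subst hk
          refine Or.inr ⟨?_, ?_⟩
          · rw [Function.update_self, Function.update_of_ne (by omega)]; exact hlo'.symm
          · rw [Function.update_self, Function.update_of_ne (by omega), hhi']; omega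
        · have hne1 : k + 1 ≠ n + 2 := by omega
          have hne2 : k ≠ n + 2 := by omega
          simp only [Function.update_of_ne hne1, Function.update_of_ne hne2]
          exact C'.step k h1 (by omega)
      · intro k h1 h2
        by_cases hk : k = n + 2
        · subst hk
          rw [Function.update_self, Function.update_self, Function.update_self]
          refine Or.inr ⟨rfl, hx1, hx2, hx3, ?_⟩
          intro t ht1 ht2 heq
          have := hxmin t ht1 (by omega) heq
          omega
        · rw [Function.update_of_ne hk, Function.update_of_ne hk, Function.update_of_ne hk]
          exact C'.box_spec k h1 (by omega)
      · intro k h1 h2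
        by_cases hk : k = n + 2
        · subst hk
          rw [Function.update_self, Function.update_self]
          ext τ
          simp only [Set.mem_Icc, Set.mem_iUnion, exists_prop]
          constructor
          · rintro ⟨hta, htb⟩
            by_cases htb1 : τ ≤ b - 1
            · have hcov := C'.cover (n + 1) (by omega) le_rfl
              have hmem : τ ∈ Set.Icc (C'.lo (n + 1)) (C'.hi (n + 1)) := by
                rw [hlo', hhi', Set.mem_Icc]; exact ⟨hta, htb1⟩
              rw [hcov] at hmem
              simp only [Set.mem_iUnion, exists_prop, Set.mem_Icc] at hmem
              obtain ⟨j, ⟨hja, hjb⟩, hj1, hj2⟩ := hmem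
              refine ⟨j, ⟨hja, by omega⟩, ?_, ?_⟩
              · rw [Function.update_of_ne (by omega)]; exact hj1
              · rw [Function.update_of_ne (by omega)]; exact hj2
            · refine ⟨n + 2, ⟨by omega, le_rfl⟩, ?_, ?_⟩
              · rw [Function.update_self]; show xR ≤ τ; omega
              · rw [Function.update_self]; show τ ≤ b; omega
          · rintro ⟨j, ⟨hja, hjb⟩, hmem1, hmem2⟩
            by_cases hj : j = n + 2
            · subst hj
              rw [Function.update_self] at hmem1 hmem2
              refine ⟨by omega, hmem2⟩
            · rw [Function.update_of_ne hj] at hmem1 hmem2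
              have hcov := C'.cover (n + 1) (by omega) le_rfl
              have hmem : τ ∈ Set.Icc (C'.lo (n + 1)) (C'.hi (n + 1)) := by
                rw [hcov]
                simp only [Set.mem_iUnion, exists_prop, Set.mem_Icc]
                exact ⟨j, ⟨hja, by omega⟩, hmem1, hmem2⟩
              rw [hlo', hhi', Set.mem_Icc] at hmem
              exact ⟨hmem.1, by omega⟩
        · have hkn : k ≤ n + 1 := by omega
          rw [Function.update_of_ne hk, Function.update_of_ne hk, C'.cover k h1 hkn]
          ext τ
          simp only [Set.mem_iUnion, exists_prop, Set.mem_Icc]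
          constructor
          · rintro ⟨j, ⟨hja, hjb⟩, h1', h2'⟩
            refine ⟨j, ⟨hja, hjb⟩, ?_, ?_⟩
            · rw [Function.update_of_ne (by omega : j ≠ n + 2)]; exact h1'
            · rw [Function.update_of_ne (by omega : j ≠ n + 2)]; exact h2'
          · rintro ⟨j, ⟨hja, hjb⟩, h1', h2'⟩
            rw [Function.update_of_ne (by omega : j ≠ n + 2)] at h1' h2'
            exact ⟨j, ⟨hja, hjb⟩, h1', h2'⟩
      · exact Function.update_self _ _ _
      · exact Function.update_self _ _ _
      · ext p
        simp only [boxesOf, Set.mem_setOf_eq]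
        constructor
        · rintro ⟨k, hk1, hk2, hbk⟩
          by_cases hk : k = n + 2
          · subst hk; rw [Function.update_self] at hbk; rw [← hbk]; exact hxR
          · rw [Function.update_of_ne hk] at hbk
            have hmem : p ∈ boxesOf C' := ⟨k, hk1, by omega, hbk⟩
            rw [hbox'] at hmem
            exact hmem.1
        · intro hp
          by_cases h : p = (xR, b)
          · exact ⟨n + 2, by omega, by omega, by rw [Function.update_self, h]⟩
          · have hmem : p ∈ boxesOf C' := by
              rw [hbox']
              exact ⟨hp, by rw [Set.mem_singleton_iff]; exact h⟩
            obtain ⟨k, hk1, hk2, hbk⟩ := hmem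
            exact ⟨k, hk1, by omega, by rw [Function.update_of_ne (by omega)]; exact hbk⟩
    · -- peel the L-box (a, yL)
      have hF' := peelB hab hF hy1 hy3 hymax hyL hB
      obtain ⟨C', hlo', hhi', hbox'⟩ := IH (a + 1) b (F \ {(a, yL)}) (by omega) hF'
      refine ⟨⟨Function.update C'.lo (n + 2) a,
               Function.update C'.hi (n + 2) b,
               Function.update C'.box (n + 2) (a, yL), ?_, ?_, ?_, ?_⟩, ?_, ?_, ?_⟩
      · intro k h1 h2
        by_cases hk : k = n + 2
        · subst hk; rw [Function.update_self, Function.update_self]; push_cast; omega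
        · rw [Function.update_of_ne hk, Function.update_of_ne hk]; exact C'.size k h1 (by omega)
      · intro k h1 h2
        by_cases hk : k = n + 1
        · subst hk
          refine Or.inl ⟨?_, ?_⟩
          · rw [Function.update_self, Function.update_of_ne (by omega), hlo']; omega
          · rw [Function.update_self, Function.update_of_ne (by omega)]; exact hhi'.symm
        · have hne1 : k + 1 ≠ n + 2 := by omega
          have hne2 : k ≠ n + 2 := by omega
          simp only [Function.update_of_ne hne1, Function.update_of_ne hne2]
          exact C'.step k h1 (by omega)
      · intro k h1 h2
        by_cases hk : k = n + 2
        · subst hk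
          rw [Function.update_self, Function.update_self, Function.update_self]
          refine Or.inl ⟨rfl, hy1, hy2, hy3, ?_⟩
          intro t ht1 ht2 heq
          have := hymax t (by omega) ht2 heq
          omega
        · rw [Function.update_of_ne hk, Function.update_of_ne hk, Function.update_of_ne hk]
          exact C'.box_spec k h1 (by omega)
      · intro k h1 h2
        by_cases hk : k = n + 2
        · subst hk
          rw [Function.update_self, Function.update_self]
          ext τ
          simp only [Set.mem_Icc, Set.mem_iUnion, exists_prop]
          constructor
          · rintro ⟨hta, htb⟩
            by_cases hta1 : a + 1 ≤ τ
            · have hcov := C'.cover (n + 1) (by omega) le_rfl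
              have hmem : τ ∈ Set.Icc (C'.lo (n + 1)) (C'.hi (n + 1)) := by
                rw [hlo', hhi', Set.mem_Icc]; exact ⟨hta1, htb⟩
              rw [hcov] at hmem
              simp only [Set.mem_iUnion, exists_prop, Set.mem_Icc] at hmem
              obtain ⟨j, ⟨hja, hjb⟩, hj1, hj2⟩ := hmem
              refine ⟨j, ⟨hja, by omega⟩, ?_, ?_⟩
              · rw [Function.update_of_ne (by omega)]; exact hj1
              · rw [Function.update_of_ne (by omega)]; exact hj2
            · refine ⟨n + 2, ⟨by omega, le_rfl⟩, ?_, ?_⟩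
              · rw [Function.update_self]; show a ≤ τ; omega
              · rw [Function.update_self]; show τ ≤ yL; omega
          · rintro ⟨j, ⟨hja, hjb⟩, hmem1, hmem2⟩
            by_cases hj : j = n + 2
            · subst hj
              rw [Function.update_self] at hmem1 hmem2
              exact ⟨hmem1, by omega⟩
            · rw [Function.update_of_ne hj] at hmem1 hmem2
              have hcov := C'.cover (n + 1) (by omega) le_rfl
              have hmem : τ ∈ Set.Icc (C'.lo (n + 1)) (C'.hi (n + 1)) := by
                rw [hcov]
                simp only [Set.mem_iUnion, exists_prop, Set.mem_Icc]
                exact ⟨j, ⟨hja, by omega⟩, hmem1, hmem2⟩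
              rw [hlo', hhi', Set.mem_Icc] at hmem
              exact ⟨by omega, hmem.2⟩
        · have hkn : k ≤ n + 1 := by omega
          rw [Function.update_of_ne hk, Function.update_of_ne hk, C'.cover k h1 hkn]
          ext τ
          simp only [Set.mem_iUnion, exists_prop, Set.mem_Icc]
          constructor
          · rintro ⟨j, ⟨hja, hjb⟩, h1', h2'⟩
            refine ⟨j, ⟨hja, hjb⟩, ?_, ?_⟩
            · rw [Function.update_of_ne (by omega : j ≠ n + 2)]; exact h1'
            · rw [Function.update_of_ne (by omega : j ≠ n + 2)]; exact h2'
          · rintro ⟨j, ⟨hja, hjb⟩, h1', h2'⟩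
            rw [Function.update_of_ne (by omega : j ≠ n + 2)] at h1' h2'
            exact ⟨j, ⟨hja, hjb⟩, h1', h2'⟩
      · exact Function.update_self _ _ _
      · exact Function.update_self _ _ _
      · ext p
        simp only [boxesOf, Set.mem_setOf_eq]
        constructor
        · rintro ⟨k, hk1, hk2, hbk⟩
          by_cases hk : k = n + 2
          · subst hk; rw [Function.update_self] at hbk; rw [← hbk]; exact hyL
          · rw [Function.update_of_ne hk] at hbk
            have hmem : p ∈ boxesOf C' := ⟨k, hk1, by omega, hbk⟩
            rw [hbox'] at hmem
            exact hmem.1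
        · intro hp
          by_cases h : p = (a, yL)
          · exact ⟨n + 2, by omega, by omega, by rw [Function.update_self, h]⟩
          · have hmem : p ∈ boxesOf C' := by
              rw [hbox']
              exact ⟨hp, by rw [Set.mem_singleton_iff]; exact h⟩
            obtain ⟨k, hk1, hk2, hbk⟩ := hmem
            exact ⟨k, hk1, by omega, by rw [Function.update_of_ne (by omega)]; exact hbk⟩

end Chain

section ChainLemmas

variable {i : ℤ → I}

lemma env_mono {l : ℕ} (C : AdmissibleChain i l) :
    ∀ j k : ℕ, 1 ≤ j → j ≤ k → k ≤ l → C.lo k ≤ C.lo j ∧ C.hi j ≤ C.hi k := by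
  intro j k h1 hjk hkl
  induction k with
  | zero => exact absurd (le_trans h1 hjk) (by omega)
  | succ k IHk =>
    rcases Nat.lt_or_ge j (k + 1) with h | h
    · have hjk' : j ≤ k := by omega
      have hk : 1 ≤ k := le_trans h1 hjk'
      have IH := IHk hjk' (by omega)
      rcases C.step k hk (by omega) with ⟨h1', h2'⟩ | ⟨h1', h2'⟩ <;>
        exact ⟨by omega, by omega⟩
    · have hj : j = k + 1 := by omega
      subst hj; exact ⟨le_rfl, le_rfl⟩

lemma lo_le_hi {l : ℕ} (C : AdmissibleChain i l) :
    ∀ k, 1 ≤ k → k ≤ l → C.lo k ≤ C.hi k := by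
  intro k h1 h2
  have hs := C.size k h1 h2
  have hc : (1 : ℤ) ≤ (k : ℤ) := by exact_mod_cast h1
  omega

lemma box_sub {l : ℕ} (C : AdmissibleChain i l) :
    ∀ k, 1 ≤ k → k ≤ l →
      C.lo k ≤ (C.box k).1 ∧ (C.box k).1 ≤ (C.box k).2 ∧ (C.box k).2 ≤ C.hi k := by
  intro k h1 h2
  rcases C.box_spec k h1 h2 with ⟨e1, e2, e3, _, _⟩ | ⟨e1, e2, e3, _, _⟩
  · exact ⟨le_of_eq e1.symm, by rw [e1]; exact e2, e3⟩
  · exact ⟨e2, by rw [e1]; exact e3, le_of_eq e1⟩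

lemma growth {l : ℕ} (C : AdmissibleChain i l) :
    ∀ k, 2 ≤ k → k ≤ l →
      (C.lo k = C.lo (k - 1) - 1 ∧ C.hi k = C.hi (k - 1) ∧ (C.box k).1 = C.lo k) ∨
      (C.lo k = C.lo (k - 1) ∧ C.hi k = C.hi (k - 1) + 1 ∧ (C.box k).2 = C.hi k) := by
  intro k h2 hkl
  have hk1 : k - 1 + 1 = k := by omega
  have hstep := C.step (k - 1) (by omega) (by omega)
  rw [hk1] at hstep
  have hcov := C.cover k (by omega) hkl
  have hsub := box_sub C k (by omega) hkl
  rcases hstep with ⟨e1, e2⟩ | ⟨e1, e2⟩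
  · left
    refine ⟨by omega, e2, ?_⟩
    have hmem : C.lo k ∈ Set.Icc (C.lo k) (C.hi k) :=
      Set.mem_Icc.mpr ⟨le_rfl, lo_le_hi C k (by omega) hkl⟩
    rw [hcov] at hmem
    simp only [Set.mem_iUnion, exists_prop, Set.mem_Icc] at hmem
    obtain ⟨j, ⟨hja, hjb⟩, hj1, hj2⟩ := hmem
    by_cases hjk : j = k
    · subst hjk; exact le_antisymm hj1 hsub.1
    · exfalso
      have hmono := env_mono C j (k - 1) hja (by omega) (by omega)
      have hsubj := box_sub C j hja (by omega)
      omega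
  · right
    refine ⟨by omega, e2, ?_⟩
    have hmem : C.hi k ∈ Set.Icc (C.lo k) (C.hi k) :=
      Set.mem_Icc.mpr ⟨lo_le_hi C k (by omega) hkl, le_rfl⟩
    rw [hcov] at hmem
    simp only [Set.mem_iUnion, exists_prop, Set.mem_Icc] at hmem
    obtain ⟨j, ⟨hja, hjb⟩, hj1, hj2⟩ := hmem
    by_cases hjk : j = k
    · subst hjk; exact le_antisymm hsub.2.2 hj2
    · exfalso
      have hmono := env_mono C j (k - 1) hja (by omega) (by omega)
      have hsubj := box_sub C j hja (by omega)
      omega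

lemma endpoint_cov {l : ℕ} (C : AdmissibleChain i l) :
    ∀ k, 1 ≤ k → k ≤ l → ∀ τ : ℤ, C.lo k ≤ τ → τ ≤ C.hi k →
      ∃ j, 1 ≤ j ∧ j ≤ k ∧ ((C.box j).1 = τ ∨ (C.box j).2 = τ) := by
  intro k
  induction k with
  | zero => intro h1; exact absurd h1 (by omega)
  | succ k IHk =>
    intro h1 hkl τ hτ1 hτ2
    by_cases hk0 : k = 0
    · subst hk0
      simp only [Nat.zero_add] at hτ1 hτ2
      have hs := C.size 1 le_rfl hkl
      have hsub := box_sub C 1 le_rfl hkl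
      have hhi1 : C.hi 1 = C.lo 1 := by rw [hs]; push_cast; ring
      exact ⟨1, le_rfl, le_rfl, Or.inl (by omega)⟩
    · have hk1 : 1 ≤ k := by omega
      have hgr := growth C (k + 1) (by omega) hkl
      simp only [Nat.add_sub_cancel] at hgr
      rcases hgr with ⟨e1, e2, e3⟩ | ⟨e1, e2, e3⟩
      · by_cases hτ : τ = C.lo (k + 1)
        · exact ⟨k + 1, by omega, le_rfl, Or.inl (by rw [e3, hτ])⟩
        · obtain ⟨j, hj1, hj2, hj3⟩ := IHk hk1 (by omega) τ (by omega) (by omega)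
          exact ⟨j, hj1, by omega, hj3⟩
      · by_cases hτ : τ = C.hi (k + 1)
        · exact ⟨k + 1, by omega, le_rfl, Or.inr (by rw [e3, hτ])⟩
        · obtain ⟨j, hj1, hj2, hj3⟩ := IHk hk1 (by omega) τ (by omega) (by omega)
          exact ⟨j, hj1, by omega, hj3⟩

lemma firstcov {a b : ℤ} {F : Set (ℤ × ℤ)} (n : ℕ) (hb : b = a + n)
    (hF : MaxCommFamily i a b F) :
    ∀ τ : ℤ, a ≤ τ → τ ≤ b → ∃ u v : ℤ, (u, v) ∈ F ∧ (u = τ ∨ v = τ) := by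
  obtain ⟨C, hlo, hhi, hbox⟩ := exists_chain n a b F hb hF
  intro τ h1 h2
  obtain ⟨j, hj1, hj2, hj3⟩ := endpoint_cov C (n + 1) (by omega) le_rfl τ
    (by rw [hlo]; exact h1) (by rw [hhi]; exact h2)
  refine ⟨(C.box j).1, (C.box j).2, ?_, hj3⟩
  have hmem : C.box j ∈ boxesOf C := ⟨j, hj1, hj2, rfl⟩
  rw [hbox] at hmem
  simpa using hmem

lemma effend_data {a b : ℤ} {F : Set (ℤ × ℤ)} {l : ℕ} (C : AdmissibleChain i l)
    (hlo : C.lo l = a) (hhi : C.hi l = b) (hbox : boxesOf C = F)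
    {x y : ℤ} (hxy : (x, y) ∈ F) (heff : IsEffectiveEnd i a b F x y y) :
    x = y ∨ ∃ k, 2 ≤ k ∧ k ≤ l ∧ C.box k = (x, y) ∧ C.hi k = y ∧
      C.lo (k - 1) = C.lo k ∧ C.hi (k - 1) = y - 1 := by
  have hxyb : (x, y) ∈ boxesOf C := by rw [hbox]; exact hxy
  obtain ⟨k, hk1, hkl, hbk⟩ := hxyb
  have heq := heff.2 l C hlo hhi hbox k hk1 hkl hbk
  have hsub := box_sub C k hk1 hkl
  rw [hbk] at hsub
  dsimp only at hsub
  by_cases hk2 : k = 1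
  · subst hk2
    left
    rw [show env C 1 = Set.Icc (C.lo 1) (C.hi 1) from if_neg one_ne_zero,
      show env C (1 - 1) = (∅ : Set ℤ) from if_pos rfl, Set.diff_empty] at heq
    have hs := C.size 1 le_rfl hkl
    have hhi1 : C.hi 1 = C.lo 1 := by rw [hs]; push_cast; ring
    have hy : y ∈ Set.Icc (C.lo 1) (C.hi 1) := by
      rw [← heq]; exact Set.mem_singleton y
    rw [Set.mem_Icc] at hy
    omega
  · have hk2' : 2 ≤ k := by omega
    rcases growth C k hk2' hkl with ⟨e1, e2, e3⟩ | ⟨e1, e2, e3⟩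
    · left
      have hlok : C.lo k ∈ env C k \ env C (k - 1) := by
        constructor
        · rw [show env C k = Set.Icc (C.lo k) (C.hi k) from if_neg (by omega)]
          exact Set.mem_Icc.mpr ⟨le_rfl, lo_le_hi C k (by omega) hkl⟩
        · rw [show env C (k - 1) = Set.Icc (C.lo (k - 1)) (C.hi (k - 1)) from if_neg (by omega)]
          intro hmem
          rw [Set.mem_Icc] at hmem
          omega
      rw [← heq] at hlok
      have hly : C.lo k = y := hlok
      omega
    · right
      have hhik : C.hi k ∈ env C k \ env C (k - 1) := by
        constructor
        · rw [show env C k = Set.Icc (C.lo k) (C.hi k) from if_neg (by omega)]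
          exact Set.mem_Icc.mpr ⟨lo_le_hi C k (by omega) hkl, le_rfl⟩
        · rw [show env C (k - 1) = Set.Icc (C.lo (k - 1)) (C.hi (k - 1)) from if_neg (by omega)]
          intro hmem
          rw [Set.mem_Icc] at hmem
          omega
      rw [← heq] at hhik
      have hyy : C.hi k = y := hhik
      exact ⟨k, hk2', hkl, hbk, hyy, e1.symm, by omega⟩

lemma effend_data_x {a b : ℤ} {F : Set (ℤ × ℤ)} {l : ℕ} (C : AdmissibleChain i l)
    (hlo : C.lo l = a) (hhi : C.hi l = b) (hbox : boxesOf C = F)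
    {x y : ℤ} (hxy : (x, y) ∈ F) (heff : IsEffectiveEnd i a b F x y x) :
    x = y ∨ ∃ k, 2 ≤ k ∧ k ≤ l ∧ C.box k = (x, y) ∧ C.lo k = x ∧
      C.lo (k - 1) = x + 1 ∧ C.hi (k - 1) = C.hi k := by
  have hxyb : (x, y) ∈ boxesOf C := by rw [hbox]; exact hxy
  obtain ⟨k, hk1, hkl, hbk⟩ := hxyb
  have heq := heff.2 l C hlo hhi hbox k hk1 hkl hbk
  have hsub := box_sub C k hk1 hkl
  rw [hbk] at hsub
  dsimp only at hsub
  by_cases hk2 : k = 1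
  · subst hk2
    left
    rw [show env C 1 = Set.Icc (C.lo 1) (C.hi 1) from if_neg one_ne_zero,
      show env C (1 - 1) = (∅ : Set ℤ) from if_pos rfl, Set.diff_empty] at heq
    have hs := C.size 1 le_rfl hkl
    have hhi1 : C.hi 1 = C.lo 1 := by rw [hs]; push_cast; ring
    have hy : x ∈ Set.Icc (C.lo 1) (C.hi 1) := by
      rw [← heq]; exact Set.mem_singleton x
    rw [Set.mem_Icc] at hy
    omega
  · have hk2' : 2 ≤ k := by omega
    rcases growth C k hk2' hkl with ⟨e1, e2, e3⟩ | ⟨e1, e2, e3⟩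
    · right
      have hlok : C.lo k ∈ env C k \ env C (k - 1) := by
        constructor
        · rw [show env C k = Set.Icc (C.lo k) (C.hi k) from if_neg (by omega)]
          exact Set.mem_Icc.mpr ⟨le_rfl, lo_le_hi C k (by omega) hkl⟩
        · rw [show env C (k - 1) = Set.Icc (C.lo (k - 1)) (C.hi (k - 1)) from if_neg (by omega)]
          intro hmem
          rw [Set.mem_Icc] at hmem
          omega
      rw [← heq] at hlok
      have hlx : C.lo k = x := hlok
      exact ⟨k, hk2', hkl, hbk, hlx, by omega, by omega⟩
    · left
      have hhik : C.hi k ∈ env C k \ env C (k - 1) := by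
        constructor
        · rw [show env C k = Set.Icc (C.lo k) (C.hi k) from if_neg (by omega)]
          exact Set.mem_Icc.mpr ⟨lo_le_hi C k (by omega) hkl, le_rfl⟩
        · rw [show env C (k - 1) = Set.Icc (C.lo (k - 1)) (C.hi (k - 1)) from if_neg (by omega)]
          intro hmem
          rw [Set.mem_Icc] at hmem
          omega
      rw [← heq] at hhik
      have hyy : C.hi k = x := hhik
      omega

lemma f1_right {F : Set (ℤ × ℤ)} {l : ℕ} (C : AdmissibleChain i l) (hbox : boxesOf C = F)
    {x y : ℤ} {k : ℕ} (hk2 : 2 ≤ k) (hkl : k ≤ l) (hbk : C.box k = (x, y))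
    (hhik : C.hi k = y) (hhik1 : C.hi (k - 1) = y - 1) :
    ∀ u v : ℤ, (u, v) ∈ F → y ≤ v → x < u → ∀ τ, x ≤ τ → τ < u → i τ ≠ i v := by
  intro u v huv hyv hxu τ hτ1 hτ2
  have huvb : (u, v) ∈ boxesOf C := by rw [hbox]; exact huv
  obtain ⟨p, hp1, hpl, hbp⟩ := huvb
  have hu : (C.box p).1 = u := by rw [hbp]
  have hv : (C.box p).2 = v := by rw [hbp]
  have hsubk := box_sub C k (by omega) hkl
  rw [hbk] at hsubk
  dsimp only at hsubk
  rcases lt_trichotomy p k with hpk | hpk | hpk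
  · exfalso
    have hmono := env_mono C p (k - 1) hp1 (by omega) (by omega)
    have hsubp := box_sub C p hp1 (by omega)
    omega
  · exfalso
    subst hpk
    rw [hbk] at hbp
    have : x = u := congrArg Prod.fst hbp
    omega
  · have hmono := env_mono C k p (by omega) (by omega) hpl
    rcases C.box_spec p (by omega) hpl with ⟨e1, _, _, _, _⟩ | ⟨e1, _, _, _, e5⟩
    · exfalso
      rw [hu] at e1
      omega
    · intro heq
      have hne := e5 τ (by omega) (by rw [hu]; exact hτ2)
      rw [← e1, hv] at hne  -- careful
      exact hne heq

lemma f1_left {F : Set (ℤ × ℤ)} {l : ℕ} (C : AdmissibleChain i l) (hbox : boxesOf C = F)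
    {x y : ℤ} {k : ℕ} (hk2 : 2 ≤ k) (hkl : k ≤ l) (hbk : C.box k = (x, y))
    (hlok : C.lo k = x) (hlok1 : C.lo (k - 1) = x + 1) :
    ∀ u v : ℤ, (u, v) ∈ F → u ≤ x → v < y → ∀ τ, v < τ → τ ≤ y → i τ ≠ i u := by
  intro u v huv hux hvy τ hτ1 hτ2
  have huvb : (u, v) ∈ boxesOf C := by rw [hbox]; exact huv
  obtain ⟨p, hp1, hpl, hbp⟩ := huvb
  have hu : (C.box p).1 = u := by rw [hbp]
  have hv : (C.box p).2 = v := by rw [hbp]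
  have hsubk := box_sub C k (by omega) hkl
  rw [hbk] at hsubk
  dsimp only at hsubk
  rcases lt_trichotomy p k with hpk | hpk | hpk
  · exfalso
    have hmono := env_mono C p (k - 1) hp1 (by omega) (by omega)
    have hsubp := box_sub C p hp1 (by omega)
    omega
  · exfalso
    subst hpk
    rw [hbk] at hbp
    have : y = v := congrArg Prod.snd hbp
    omega
  · have hmono := env_mono C k p (by omega) (by omega) hpl
    rcases C.box_spec p (by omega) hpl with ⟨e1, _, _, _, e5⟩ | ⟨e1, _, _, _, _⟩
    · intro heq
      have hne := e5 τ (by rw [hv]; exact hτ1) (by omega)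
      rw [← e1, hu] at hne
      exact hne heq
    · exfalso
      rw [hv] at e1
      omega

end ChainLemmas

section Corners

variable {i : ℤ → I}

lemma G1 {a b : ℤ} {F : Set (ℤ × ℤ)} (hF : MaxCommFamily i a b F)
    {x y : ℤ} (hxy : (x, y) ∈ F) (hlt : x < y)
    (hf1 : ∀ u v : ℤ, (u, v) ∈ F → y ≤ v → x < u → ∀ τ, x ≤ τ → τ < u → i τ ≠ i v) :
    ∃ m, x ≤ m ∧ m < y ∧ i m = i x ∧ (∀ t, x ≤ t → t < y → i t = i x → t ≤ m) ∧
      (x, m) ∈ F := by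
  have hib := hF.1.1 _ hxy
  obtain ⟨m, ⟨hm1, hm2, hm3⟩, hmax'⟩ := exists_greatest (fun t => x ≤ t ∧ t < y ∧ i t = i x) y
    (fun z hz => le_of_lt hz.2.1) ⟨x, le_rfl, hlt, rfl⟩
  have hmax : ∀ t, x ≤ t → t < y → i t = i x → t ≤ m := fun t u v w => hmax' t ⟨u, v, w⟩
  refine ⟨m, hm1, hm2, hm3, hmax, ?_⟩
  refine mem_of_commutes hF ⟨hm1, hm3.symm⟩ (hF.2.1 _ hxy).1
    (le_trans (le_of_lt hm2) (hF.2.1 _ hxy).2) ?_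
  intro r hr
  have hcomm := hF.1.2 _ hxy r hr
  have hrbox := hF.1.1 r hr
  rcases hcomm with ⟨h1, h2⟩ | ⟨h1, h2⟩
  · by_cases hv : r.2 < y
    · refine Or.inl ⟨h1, fun t ht1 ht2 heq => ?_⟩
      have := hmax t (le_trans hm1 (le_of_lt ht1)) (by omega) (by rw [← hm3]; exact heq)
      omega
    · by_cases hu : r.1 ≤ x
      · exact Or.inr ⟨gapBelow_vac hu, gapAbove_vac (by omega)⟩
      · refine Or.inr ⟨fun t ht1 ht2 heq => ?_, gapAbove_vac (by omega)⟩
        exact hf1 r.1 r.2 (by simpa using hr) (by omega) (by omega) t ht1 ht2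
          (by rw [heq]; exact hrbox.2)
  · exact Or.inr ⟨h1, fun t ht1 ht2 heq => h2 t ht1 (by omega) heq⟩

lemma G2 {a b : ℤ} {F : Set (ℤ × ℤ)} (hF : MaxCommFamily i a b F)
    {x y t : ℤ} (hxy : (x, y) ∈ F) (hxt : (x, t) ∈ F) (hty : t < y) :
    ∃ w, t < w ∧ w ≤ y ∧ i w = i x ∧ (∀ τ, t < τ → τ < w → i τ ≠ i x) ∧ (x, w) ∈ F := by
  have hib := hF.1.1 _ hxy
  have hibt := hF.1.1 _ hxt
  obtain ⟨w, ⟨hw1, hw3⟩, hmin'⟩ := exists_least (fun τ => t < τ ∧ i τ = i x) (t + 1)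
    (fun z hz => by omega) ⟨y, hty, hib.2.symm⟩
  have hmin : ∀ τ, t < τ → i τ = i x → w ≤ τ := fun τ u v => hmin' τ ⟨u, v⟩
  have hwy : w ≤ y := hmin' y ⟨hty, hib.2.symm⟩
  refine ⟨w, hw1, hwy, hw3, fun τ h1 h2 h3 => absurd (hmin τ h1 h3) (by omega), ?_⟩
  refine mem_of_commutes hF ⟨le_trans hibt.1 (le_of_lt hw1), hw3.symm⟩ (hF.2.1 _ hxy).1
    (le_trans hwy (hF.2.1 _ hxy).2) ?_
  intro r hr
  have hcy := hF.1.2 _ hxy r hr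
  have hct := hF.1.2 _ hxt r hr
  rcases hcy with ⟨h1, h2⟩ | ⟨h1, h2⟩
  · by_cases hgap : ∀ τ, w < τ → τ ≤ r.2 → i τ ≠ i x
    · exact Or.inl ⟨h1, fun τ hτ1 hτ2 heq => hgap τ hτ1 hτ2 (by rw [← hw3]; exact heq)⟩
    · push_neg at hgap
      obtain ⟨τ', hτ'1, hτ'2, hτ'3⟩ := hgap
      rcases hct with ⟨h1t, h2t⟩ | ⟨h1t, h2t⟩
      · exact absurd (by rw [hτ'3]; exact hibt.2) (h2t τ' (by omega) hτ'2)
      · exact Or.inr ⟨h1t, gapAbove_vac (by omega)⟩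
  · exact Or.inr ⟨h1, fun τ hτ1 hτ2 heq => h2 τ hτ1 (by omega) heq⟩

lemma G1m {a b : ℤ} {F : Set (ℤ × ℤ)} (hF : MaxCommFamily i a b F)
    {x y : ℤ} (hxy : (x, y) ∈ F) (hlt : x < y)
    (hf1 : ∀ u v : ℤ, (u, v) ∈ F → u ≤ x → v < y → ∀ τ, v < τ → τ ≤ y → i τ ≠ i u) :
    ∃ m, x < m ∧ m ≤ y ∧ i m = i y ∧ (∀ t, x < t → t ≤ y → i t = i y → m ≤ t) ∧
      (m, y) ∈ F := by
  have hib := hF.1.1 _ hxy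
  obtain ⟨m, ⟨hm1, hm2, hm3⟩, hmin'⟩ := exists_least (fun t => x < t ∧ t ≤ y ∧ i t = i y)
    (x + 1) (fun z hz => by omega) ⟨y, hlt, le_rfl, rfl⟩
  have hmin : ∀ t, x < t → t ≤ y → i t = i y → m ≤ t := fun t u v w => hmin' t ⟨u, v, w⟩
  refine ⟨m, hm1, hm2, hm3, hmin, ?_⟩
  refine mem_of_commutes hF ⟨hm2, hm3⟩ (le_trans (hF.2.1 _ hxy).1 (by omega))
    (hF.2.1 _ hxy).2 ?_
  intro r hr
  have hcomm := hF.1.2 _ hxy r hr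
  have hrbox := hF.1.1 r hr
  rcases hcomm with ⟨h1, h2⟩ | ⟨h1, h2⟩
  · by_cases hu : x < r.1
    · refine Or.inl ⟨fun τ hτ1 hτ2 heq => ?_, h2⟩
      have := hmin τ (by omega) (by omega) (by rw [← hm3]; exact heq)
      omega
    · by_cases hv : y ≤ r.2
      · exact Or.inr ⟨gapBelow_vac (by omega), gapAbove_vac hv⟩
      · refine Or.inr ⟨gapBelow_vac (by omega), fun τ hτ1 hτ2 heq => ?_⟩
        exact hf1 r.1 r.2 (by simpa using hr) (by omega) (by omega) τ hτ1 hτ2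
          (by rw [heq]; exact hrbox.2.symm)
  · exact Or.inr ⟨fun τ hτ1 hτ2 => h1 τ (by omega) hτ2, h2⟩

lemma G2m {a b : ℤ} {F : Set (ℤ × ℤ)} (hF : MaxCommFamily i a b F)
    {x y t : ℤ} (hxy : (x, y) ∈ F) (hty : (t, y) ∈ F) (hxt : x < t) :
    ∃ w, w < t ∧ x ≤ w ∧ i w = i y ∧ (∀ τ, w < τ → τ < t → i τ ≠ i y) ∧ (w, y) ∈ F := by
  have hib := hF.1.1 _ hxy
  have hibt := hF.1.1 _ hty
  obtain ⟨w, ⟨hw1, hw3⟩, hmax'⟩ := exists_greatest (fun τ => τ < t ∧ i τ = i y) (t - 1)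
    (fun z hz => by omega) ⟨x, hxt, hib.2⟩
  have hmax : ∀ τ, τ < t → i τ = i y → τ ≤ w := fun τ u v => hmax' τ ⟨u, v⟩
  have hxw : x ≤ w := hmax' x ⟨hxt, hib.2⟩
  refine ⟨w, hw1, hxw, hw3, fun τ h1 h2 h3 => absurd (hmax τ h2 h3) (by omega), ?_⟩
  refine mem_of_commutes hF ⟨le_trans (le_of_lt hw1) hibt.1, hw3⟩
    (le_trans (hF.2.1 _ hxy).1 hxw) (hF.2.1 _ hty).2 ?_
  intro r hr
  have hcy := hF.1.2 _ hxy r hr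
  have hct := hF.1.2 _ hty r hr
  rcases hcy with ⟨h1, h2⟩ | ⟨h1, h2⟩
  · by_cases hgap : ∀ τ, r.1 ≤ τ → τ < w → i τ ≠ i y
    · exact Or.inl ⟨fun τ hτ1 hτ2 heq => hgap τ hτ1 hτ2 (by rw [← hw3]; exact heq), h2⟩
    · push_neg at hgap
      obtain ⟨τ', hτ'1, hτ'2, hτ'3⟩ := hgap
      have hτ'x : x ≤ τ' := by
        by_contra hc
        push_neg at hc
        exact h1 τ' hτ'1 hc (by rw [hτ'3]; exact hib.2.symm)
      rcases hct with ⟨h1t, h2t⟩ | ⟨h1t, h2t⟩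
      · exact absurd (by rw [hτ'3]; exact hibt.2.symm) (h1t τ' hτ'1 (by omega))
      · exact Or.inr ⟨gapBelow_vac (by omega), h2t⟩
  · exact Or.inr ⟨fun τ hτ1 hτ2 => h1 τ (by omega) hτ2, h2⟩

lemma uniq_left {F : Set (ℤ × ℤ)} (hcf : CommFamily i F) {x s y' : ℤ}
    (hxs : (x, s) ∈ F) (hmin : ∀ t, (x, t) ∈ F → s ≤ t)
    (h2 : (x, y') ∈ F) (h3 : LeftCorner i F x y' ∨ x = y') : y' = s := by
  have hs : s ≤ y' := hmin y' h2
  rcases eq_or_lt_of_le hs with h | h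
  · exact h.symm
  · exfalso
    have hxs' := hcf.1 _ hxs
    have hxy' := hcf.1 _ h2
    rcases h3 with ⟨⟨x'', hns, hmem⟩, _⟩ | h3
    · have hcomm := hcf.2 _ hxs _ hmem
      rcases hcomm with ⟨_, h2'⟩ | ⟨h1', _⟩
      · exact h2' y' h le_rfl (by rw [← hxy'.2]; exact hxs'.2)
      · exact h1' x le_rfl hns.1 hns.2.1.symm
    · have := hxs'.1
      omega

lemma uniq_right {F : Set (ℤ × ℤ)} (hcf : CommFamily i F) {y s' x' : ℤ}
    (hsy : (s', y) ∈ F) (hmax : ∀ t, (t, y) ∈ F → t ≤ s')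
    (h2 : (x', y) ∈ F) (h3 : RightCorner i F x' y ∨ x' = y) : x' = s' := by
  have hs : x' ≤ s' := hmax x' h2
  rcases eq_or_lt_of_le hs with h | h
  · exact h
  · exfalso
    have hb1 := hcf.1 _ hsy
    have hb2 := hcf.1 _ h2
    rcases h3 with ⟨⟨w, hps, hmem⟩, _⟩ | h3
    · have hcomm := hcf.2 _ hmem _ hsy
      rcases hcomm with ⟨_, h2'⟩ | ⟨h1', _⟩
      · exact h2' y hps.1 le_rfl hps.2.1.symm
      · exact h1' x' le_rfl h (by rw [hb2.2]; exact hb1.2.symm)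
    · have := hb1.1
      omega

end Corners

section Struct

variable {i : ℤ → I}

lemma struct_left : ∀ (n : ℕ) (a b : ℤ) (F : Set (ℤ × ℤ)), b = a + n →
    MaxCommFamily i a b F → ∀ x s : ℤ, (x, s) ∈ F → (∀ t, (x, t) ∈ F → s ≤ t) → x < s →
    ∃ z, x < z ∧ i z = i x ∧ (∀ τ, x < τ → τ < z → i τ ≠ i x) ∧ (z, s) ∈ F := by
  intro n
  induction n with
  | zero =>
    intro a b F hb hF x s hxs hmin hlt
    have hb' : b = a := by simpa using hb
    subst hb'
    have hFa : F = {(b, b)} := base_family hF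
    rw [hFa, Set.mem_singleton_iff] at hxs
    have hx : x = b := congrArg Prod.fst hxs
    have hs : s = b := congrArg Prod.snd hxs
    omega
  | succ n IH =>
    intro a b F hb hF x s hxs hmin hlt
    have hab : a < b := by omega
    obtain ⟨yL, hy1, hy2, hy3, hymax, hyL⟩ := pL_spec (le_of_lt hab) hF
    obtain ⟨xR, hx1, hx2, hx3, hxmin, hxR⟩ := pR_spec (le_of_lt hab) hF
    rcases side_cases hF hy3 hymax hx3 hxmin hy2 hx1 with hA | hB
    · -- Case A : peel (xR, b); (x,s) = (xR,b) is impossible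
      have hF' := peelA hab hF hx2 hx3 hxmin hxR hA
      by_cases hps : (x, s) = (xR, b)
      · exfalso
        have hx' : x = xR := congrArg Prod.fst hps
        have hs' : s = b := congrArg Prod.snd hps
        have hax : a ≤ x := (hF.2.1 _ hxs).1
        obtain ⟨u, v, huv, hend⟩ := firstcov n (by omega) hF' x hax (by omega)
        have hrang := hF'.2.1 _ huv
        simp only at hrang
        rcases hend with hend | hend
        · rw [hend] at huv
          have := hmin v huv.1
          omega
        · rw [hend] at huv
          have hbox : IsBox i u x := hF.1.1 _ huv.1
          have hux : u ≤ x := hbox.1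
          -- i u = i x
          have hub : i u = i b := by
            rw [hbox.2, hx', hx3]
          rcases eq_or_lt_of_le hbox.1 with he | he
          · -- u = x : (x,x) ∈ F
            rw [he] at huv
            have := hmin x huv.1
            omega
          · have := hxmin u (by omega) (by omega) hub
            omega
      · have hxs' : (x, s) ∈ F \ {(xR, b)} := ⟨hxs, by rw [Set.mem_singleton_iff]; exact hps⟩
        obtain ⟨z, hz1, hz2, hz3, hz4⟩ := IH a (b - 1) _ (by omega) hF' x s hxs'
          (fun t ht => hmin t ht.1) hlt
        exact ⟨z, hz1, hz2, hz3, hz4.1⟩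
    · -- Case B : peel (a, yL); (x,s) = (a,yL) is the constructive case
      have hF' := peelB hab hF hy1 hy3 hymax hyL hB
      by_cases hps : (x, s) = (a, yL)
      · have hx' : x = a := congrArg Prod.fst hps
        have hs' : s = yL := congrArg Prod.snd hps
        have hisa : i s = i a := by rw [← hx']; exact (hF.1.1 _ hxs).2.symm
        obtain ⟨z, ⟨hz1, hz3⟩, hminz'⟩ := exists_least (fun τ => a < τ ∧ i τ = i a) (a + 1)
          (fun τ hτ => by omega) ⟨s, by omega, hisa⟩
        have hminz : ∀ τ, a < τ → i τ = i a → z ≤ τ := fun τ u v => hminz' τ ⟨u, v⟩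
        have hzs : z ≤ s := hminz s (by omega) hisa
        refine ⟨z, by omega, by rw [hz3, hx'], ?_, ?_⟩
        · intro τ h1' h2' heq
          exact absurd (hminz τ (by omega) (by rw [← hx']; exact heq)) (by omega)
        · refine mem_of_commutes hF ⟨hzs, by rw [hz3, hisa]⟩ (by omega)
            (hF.2.1 _ hxs).2 ?_
          intro r hr
          have hrange := hF.2.1 r hr
          by_cases hu : a < r.1
          · refine Or.inl ⟨?_, ?_⟩
            · intro τ hτ1 hτ2 heq
              have := hminz τ (by omega) (by rw [← hz3]; exact heq)
              omega
            · intro τ hτ1 hτ2 heq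
              have : i τ = i a := by rw [← hisa]; exact heq
              have := hymax τ (by omega) (by omega) this
              omega
          · have hu' : r.1 = a := le_antisymm (not_lt.mp hu) hrange.1
            have hr' := hB r hr hu'
            have hr2 : r.2 = yL := congrArg Prod.snd hr'
            exact Or.inr ⟨gapBelow_vac (by omega), gapAbove_vac (by omega)⟩
      · have hxs'' : (x, s) ∈ F \ {(a, yL)} := ⟨hxs, by rw [Set.mem_singleton_iff]; exact hps⟩
        obtain ⟨z, hz1, hz2, hz3, hz4⟩ := IH (a + 1) b _ (by omega) hF' x s hxs''
          (fun t ht => hmin t ht.1) hlt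
        exact ⟨z, hz1, hz2, hz3, hz4.1⟩

lemma struct_right : ∀ (n : ℕ) (a b : ℤ) (F : Set (ℤ × ℤ)), b = a + n →
    MaxCommFamily i a b F → ∀ s y : ℤ, (s, y) ∈ F → (∀ t, (t, y) ∈ F → t ≤ s) → s < y →
    ∃ z, z < y ∧ i z = i y ∧ (∀ τ, z < τ → τ < y → i τ ≠ i y) ∧ (s, z) ∈ F := by
  intro n
  induction n with
  | zero =>
    intro a b F hb hF s y hsy hmax hlt
    have hb' : b = a := by simpa using hb
    subst hb'
    have hFa : F = {(b, b)} := base_family hF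
    rw [hFa, Set.mem_singleton_iff] at hsy
    have hx : s = b := congrArg Prod.fst hsy
    have hs : y = b := congrArg Prod.snd hsy
    omega
  | succ n IH =>
    intro a b F hb hF s y hsy hmax hlt
    have hab : a < b := by omega
    obtain ⟨yL, hy1, hy2, hy3, hymax, hyL⟩ := pL_spec (le_of_lt hab) hF
    obtain ⟨xR, hx1, hx2, hx3, hxmin, hxR⟩ := pR_spec (le_of_lt hab) hF
    rcases side_cases hF hy3 hymax hx3 hxmin hy2 hx1 with hA | hB
    · -- Case A : peel (xR, b); (s,y) = (xR,b) is the constructive case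
      have hF' := peelA hab hF hx2 hx3 hxmin hxR hA
      by_cases hps : (s, y) = (xR, b)
      · have hs' : s = xR := congrArg Prod.fst hps
        have hy' : y = b := congrArg Prod.snd hps
        have hisb : i s = i b := by rw [← hy']; exact (hF.1.1 _ hsy).2
        obtain ⟨z, ⟨hz1, hz3⟩, hmaxz'⟩ := exists_greatest (fun τ => τ < b ∧ i τ = i b)
          (b - 1) (fun τ hτ => by omega) ⟨s, by omega, hisb⟩
        have hmaxz : ∀ τ, τ < b → i τ = i b → τ ≤ z := fun τ u v => hmaxz' τ ⟨u, v⟩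
        have hsz : s ≤ z := hmaxz s (by omega) hisb
        refine ⟨z, by omega, by rw [hz3, hy'], ?_, ?_⟩
        · intro τ h1' h2' heq
          exact absurd (hmaxz τ (by omega) (by rw [← hy']; exact heq)) (by omega)
        · refine mem_of_commutes hF ⟨hsz, by rw [hz3, hisb]⟩ (hF.2.1 _ hsy).1 (by omega) ?_
          intro r hr
          have hrange := hF.2.1 r hr
          by_cases hv : r.2 < b
          · refine Or.inl ⟨?_, ?_⟩
            · intro τ hτ1 hτ2 heq
              have : i τ = i b := by rw [← hisb]; exact heq
              have := hxmin τ (by omega) (by omega) this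
              omega
            · intro τ hτ1 hτ2 heq
              have := hmaxz τ (by omega) (by rw [← hz3]; exact heq)
              omega
          · have hv' : r.2 = b := le_antisymm hrange.2 (not_lt.mp hv)
            have hr' := hA r hr hv'
            have hr1 : r.1 = xR := congrArg Prod.fst hr'
            exact Or.inr ⟨gapBelow_vac (by omega), gapAbove_vac (by omega)⟩
      · have hsy' : (s, y) ∈ F \ {(xR, b)} := ⟨hsy, by rw [Set.mem_singleton_iff]; exact hps⟩
        obtain ⟨z, hz1, hz2, hz3, hz4⟩ := IH a (b - 1) _ (by omega) hF' s y hsy'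
          (fun t ht => hmax t ht.1) hlt
        exact ⟨z, hz1, hz2, hz3, hz4.1⟩
    · -- Case B : peel (a, yL); (s,y) = (a,yL) is impossible
      have hF' := peelB hab hF hy1 hy3 hymax hyL hB
      by_cases hps : (s, y) = (a, yL)
      · exfalso
        have hs' : s = a := congrArg Prod.fst hps
        have hy' : y = yL := congrArg Prod.snd hps
        have hyb : y ≤ b := (hF.2.1 _ hsy).2
        obtain ⟨u, v, huv, hend⟩ := firstcov n (by omega) hF' y (by omega) hyb
        have hrang := hF'.2.1 _ huv
        simp only at hrang
        rcases hend with hend | hend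
        · rw [hend] at huv
          have hbox : IsBox i y v := hF.1.1 _ huv.1
          have hyv : y ≤ v := hbox.1
          -- i v = i a
          have hva : i v = i a := by rw [← hbox.2, hy', hy3]
          have hvy : v = y := by
            have := hymax v (by omega) (by omega) hva
            omega
          rw [hvy] at huv
          have := hmax y huv.1
          omega
        · rw [hend] at huv
          have := hmax u huv.1
          omega
      · have hsy'' : (s, y) ∈ F \ {(a, yL)} := ⟨hsy, by rw [Set.mem_singleton_iff]; exact hps⟩
        obtain ⟨z, hz1, hz2, hz3, hz4⟩ := IH (a + 1) b _ (by omega) hF' s y hsy''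
          (fun t ht => hmax t ht.1) hlt
        exact ⟨z, hz1, hz2, hz3, hz4.1⟩

end Struct

/-- (i) A box of `F` with effective end `y` contains a unique smaller box of `F` with the same
left end which is a single point or in the left corner; (ii) dually for effective end `x`. -/
theorem corner_below (i : ℤ → I) (a b : ℤ) (hab : a ≤ b)
    (F : Set (ℤ × ℤ)) (hF : MaxCommFamily i a b F) (x y : ℤ) (hxy : (x, y) ∈ F) :
    (IsEffectiveEnd i a b F x y y →
      ∃! y' : ℤ, y' ≤ y ∧ (x, y') ∈ F ∧ (LeftCorner i F x y' ∨ x = y')) ∧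
    (IsEffectiveEnd i a b F x y x →
      ∃! x' : ℤ, x ≤ x' ∧ (x', y) ∈ F ∧ (RightCorner i F x' y ∨ x' = y)) := by
  have hbox : IsBox i x y := hF.1.1 _ hxy
  constructor
  · intro heff
    rcases eq_or_lt_of_le hbox.1 with hxeq | hlt
    · refine ⟨y, ⟨le_rfl, by rw [← hxeq] at hxy ⊢; exact hxy, Or.inr hxeq⟩, ?_⟩
      intro y'' hy''
      have hb2 : x ≤ y'' := (hF.1.1 _ hy''.2.1).1
      omega
    · have hn : b = a + (b - a).toNat := by omega
      obtain ⟨C, hlo, hhi, hboxC⟩ := exists_chain ((b - a).toNat) a b F hn hF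
      rcases effend_data C hlo hhi hboxC hxy heff with hxeq |
        ⟨k, hk2, hkl, hbk, hhik, hlok1, hhik1⟩
      · omega
      · have hf1 := f1_right C hboxC hk2 hkl hbk hhik hhik1
        obtain ⟨m, hm1, hm2, hm3, hmmax, hmF⟩ := G1 hF hxy hlt hf1
        obtain ⟨s, hsF, hsmin'⟩ := exists_least (fun t => (x, t) ∈ F) x
          (fun z hz => (hF.1.1 _ hz).1) ⟨m, hmF⟩
        have hsmin : ∀ t, (x, t) ∈ F → s ≤ t := hsmin'
        have hsm : s ≤ m := hsmin m hmF
        have hsy : s < y := by omega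
        have hsbox : IsBox i x s := hF.1.1 _ hsF
        rcases eq_or_lt_of_le hsbox.1 with hxs | hxs
        · refine ⟨s, ⟨by omega, hsF, Or.inr hxs⟩, ?_⟩
          intro y'' hy''
          exact uniq_left hF.1 hsF hsmin hy''.2.1 hy''.2.2
        · obtain ⟨z, hz1, hz2, hz3, hzF⟩ :=
            struct_left ((b - a).toNat) a b F hn hF x s hsF hsmin hxs
          obtain ⟨w, hw1, hw2, hw3, hw4, hwF⟩ := G2 hF hxy hsF hsy
          refine ⟨s, ⟨by omega, hsF,
            Or.inl ⟨⟨z, ⟨hz1, hz2, hz3⟩, hzF⟩, ⟨w, ⟨hw1, ?_, ?_⟩, hwF⟩⟩⟩, ?_⟩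
          · rw [hw3]; exact hsbox.2
          · intro τ h1 h2 heq
            exact hw4 τ h1 h2 (by rw [heq]; exact hsbox.2.symm)
          · intro y'' hy''
            exact uniq_left hF.1 hsF hsmin hy''.2.1 hy''.2.2
  · intro heff
    rcases eq_or_lt_of_le hbox.1 with hxeq | hlt
    · refine ⟨x, ⟨le_rfl, hxy, Or.inr hxeq⟩, ?_⟩
      intro x'' hx''
      have hb2 : x'' ≤ y := (hF.1.1 _ hx''.2.1).1
      omega
    · have hn : b = a + (b - a).toNat := by omega
      obtain ⟨C, hlo, hhi, hboxC⟩ := exists_chain ((b - a).toNat) a b F hn hF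
      rcases effend_data_x C hlo hhi hboxC hxy heff with hxeq |
        ⟨k, hk2, hkl, hbk, hlok, hlok1, hhik1⟩
      · omega
      · have hf1 := f1_left C hboxC hk2 hkl hbk hlok hlok1
        obtain ⟨m, hm1, hm2, hm3, hmmin, hmF⟩ := G1m hF hxy hlt hf1
        obtain ⟨s, hsF, hsmax'⟩ := exists_greatest (fun t => (t, y) ∈ F) y
          (fun z hz => (hF.1.1 _ hz).1) ⟨m, hmF⟩
        have hsmax : ∀ t, (t, y) ∈ F → t ≤ s := hsmax'
        have hms : m ≤ s := hsmax m hmF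
        have hxs : x < s := by omega
        have hsbox : IsBox i s y := hF.1.1 _ hsF
        rcases eq_or_lt_of_le hsbox.1 with hseq | hsy
        · refine ⟨s, ⟨by omega, hsF, Or.inr hseq⟩, ?_⟩
          intro x'' hx''
          exact uniq_right hF.1 hsF hsmax hx''.2.1 hx''.2.2
        · obtain ⟨z, hz1, hz2, hz3, hzF⟩ :=
            struct_right ((b - a).toNat) a b F hn hF s y hsF hsmax hsy
          obtain ⟨w, hw1, hw2, hw3, hw4, hwF⟩ := G2m hF hxy hsF hxs
          refine ⟨s, ⟨by omega, hsF,
            Or.inl ⟨⟨z, ⟨hz1, hz2, hz3⟩, hzF⟩, ⟨w, ⟨hw1, ?_, ?_⟩, hwF⟩⟩⟩, ?_⟩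
          · rw [hw3]; exact hsbox.2.symm
          · intro τ h1 h2 heq
            exact hw4 τ h1 h2 (by rw [heq]; exact hsbox.2)
          · intro x'' hx''
            exact uniq_right hF.1 hsF hsmax hx''.2.1 hx''.2.2

end IBoxes
end

section
/- Let (𝔠_k)_{1≤k≤l} be an admissible chain of i-boxes and k₀ a movable index with 1 ≤ k₀ < l, and let (𝔠'_k) = B_{k₀}((𝔠_k)) be the box move at k₀. If the envelope 𝔠̃_{k₀+1} = [x,y] is itself an i-box (i.e. i_x = i_y), then: (a) if T_{k₀−1} = R then 𝔠_{k₀} = [x₊,y] and 𝔠'_{k₀} = [x,y₋]; (b) if T_{k₀−1} = L then 𝔠_{k₀} = [x,y₋] and 𝔠'_{k₀} = [x₊,y]. If 𝔠̃_{k₀+1} is not an i-box, then 𝔠'_k = 𝔠_{σ(k)} where σ is the transposition of k₀ and k₀+1. -/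
namespace IBoxes

variable {I : Type*}

lemma lbox_unique {i : ℤ → I} {lo hi : ℤ} {p q : ℤ × ℤ}
    (hp : IsLBox i lo hi p) (hq : IsLBox i lo hi q) : p = q := by
  obtain ⟨hp1, hp2, hp3, hp4, hp5⟩ := hp
  obtain ⟨hq1, hq2, hq3, hq4, hq5⟩ := hq
  have h2 : p.2 = q.2 := by
    rcases lt_trichotomy p.2 q.2 with h | h | h
    · exact absurd hq4 (hp5 q.2 h hq3)
    · exact h
    · exact absurd hp4 (hq5 p.2 h hp3)
  exact Prod.ext (hp1.trans hq1.symm) h2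

lemma rbox_unique {i : ℤ → I} {lo hi : ℤ} {p q : ℤ × ℤ}
    (hp : IsRBox i lo hi p) (hq : IsRBox i lo hi q) : p = q := by
  obtain ⟨hp1, hp2, hp3, hp4, hp5⟩ := hp
  obtain ⟨hq1, hq2, hq3, hq4, hq5⟩ := hq
  have h2 : p.1 = q.1 := by
    rcases lt_trichotomy p.1 q.1 with h | h | h
    · exact absurd hp4 (hq5 p.1 hp2 h)
    · exact h
    · exact absurd hq4 (hp5 q.1 hq2 h)
  exact Prod.ext h2 (hp1.trans hq1.symm)

lemma lbox_shrink {i : ℤ → I} {lo hi : ℤ} {p : ℤ × ℤ}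
    (hne : i lo ≠ i hi) (hp : IsLBox i lo hi p) : IsLBox i lo (hi - 1) p := by
  obtain ⟨h1, h2, h3, h4, h5⟩ := hp
  have hph : p.2 ≠ hi := fun h => hne (by rw [← h, h4])
  exact ⟨h1, h2, by omega, h4, fun t ht1 ht2 => h5 t ht1 (by omega)⟩

lemma rbox_shrink {i : ℤ → I} {lo hi : ℤ} {p : ℤ × ℤ}
    (hne : i lo ≠ i hi) (hp : IsRBox i lo hi p) : IsRBox i (lo + 1) hi p := by
  obtain ⟨h1, h2, h3, h4, h5⟩ := hp
  have hph : p.1 ≠ lo := fun h => hne (by rw [← h]; exact h4)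
  exact ⟨h1, by omega, h3, h4, fun t ht1 ht2 => h5 t (by omega) ht2⟩

/-- The point newly added to the envelope at step `k+1` belongs to the box `𝔠_{k+1}`. -/
lemma new_point {i : ℤ → I} {l : ℕ} (C : AdmissibleChain i l) {k : ℕ} {z : ℤ}
    (h1 : 1 ≤ k) (h2 : k + 1 ≤ l)
    (hz1 : C.lo (k+1) ≤ z) (hz2 : z ≤ C.hi (k+1))
    (hz3 : z < C.lo k ∨ C.hi k < z) :
    (C.box (k+1)).1 ≤ z ∧ z ≤ (C.box (k+1)).2 := by
  have hc1 := C.cover (k+1) (by omega) h2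
  have hc0 := C.cover k h1 (by omega)
  have hz : z ∈ Set.Icc (C.lo (k+1)) (C.hi (k+1)) := ⟨hz1, hz2⟩
  rw [hc1] at hz
  simp only [Set.mem_iUnion, Set.mem_Icc, exists_prop] at hz
  obtain ⟨j, ⟨hj1, hj2⟩, hj3, hj4⟩ := hz
  rcases Nat.lt_or_ge j (k+1) with hj | hj
  · exfalso
    have hmem : z ∈ Set.Icc (C.lo k) (C.hi k) := by
      rw [hc0]
      simp only [Set.mem_iUnion, Set.mem_Icc, exists_prop]
      exact ⟨j, ⟨hj1, by omega⟩, hj3, hj4⟩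
    simp only [Set.mem_Icc] at hmem
    omega
  · have hjk : j = k + 1 := by omega
    subst hjk; exact ⟨hj3, hj4⟩

lemma box_L_of_left {i : ℤ → I} {l : ℕ} (C : AdmissibleChain i l) {k : ℕ}
    (h1 : 1 ≤ k) (h2 : k + 1 ≤ l)
    (hstep : C.lo (k+1) = C.lo k - 1 ∧ C.hi (k+1) = C.hi k) :
    IsLBox i (C.lo (k+1)) (C.hi (k+1)) (C.box (k+1)) := by
  have hsz := C.size (k+1) (by omega) h2
  have hnp := new_point C h1 h2 (le_refl _) (by push_cast at hsz; omega) (by omega)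
  rcases C.box_spec (k+1) (by omega) h2 with h | h
  · exact h
  · obtain ⟨r1, r2, r3, r4, r5⟩ := h
    have hb1 : (C.box (k+1)).1 = C.lo (k+1) := le_antisymm hnp.1 r2
    have hcol : i (C.lo (k+1)) = i (C.hi (k+1)) := by rw [← hb1]; exact r4
    refine ⟨hb1, by push_cast at hsz; omega, by omega, by rw [r1, ← hcol], ?_⟩
    intro t ht1 ht2
    rw [r1] at ht1
    exact absurd ht2 (by omega)

lemma box_R_of_right {i : ℤ → I} {l : ℕ} (C : AdmissibleChain i l) {k : ℕ}
    (h1 : 1 ≤ k) (h2 : k + 1 ≤ l)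
    (hstep : C.lo (k+1) = C.lo k ∧ C.hi (k+1) = C.hi k + 1) :
    IsRBox i (C.lo (k+1)) (C.hi (k+1)) (C.box (k+1)) := by
  have hsz := C.size (k+1) (by omega) h2
  have hnp := new_point C h1 h2 (by push_cast at hsz; omega) (le_refl _) (by omega)
  rcases C.box_spec (k+1) (by omega) h2 with h | h
  · obtain ⟨r1, r2, r3, r4, r5⟩ := h
    have hb2 : (C.box (k+1)).2 = C.hi (k+1) := le_antisymm r3 hnp.2
    have hcol : i (C.lo (k+1)) = i (C.hi (k+1)) := by rw [← hb2]; exact r4.symm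
    refine ⟨hb2, le_of_eq r1.symm, by push_cast at hsz; omega, by rw [r1, hcol], ?_⟩
    intro t ht1 ht2
    rw [r1] at ht2
    exact absurd ht1 (by omega)
  · exact h

lemma box_one {i : ℤ → I} {l : ℕ} (C : AdmissibleChain i l) (h : 1 ≤ l) :
    C.box 1 = (C.lo 1, C.lo 1) := by
  have hsz := C.size 1 le_rfl h
  push_cast at hsz
  rcases C.box_spec 1 le_rfl h with ⟨r1, r2, r3, _, _⟩ | ⟨r1, r2, r3, _, _⟩ <;>
    exact Prod.ext (by omega) (by omega)

lemma pair_rbox {i : ℤ → I} {lo hi c : ℤ} (h1 : lo = c) (h2 : c = hi) :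
    IsRBox i lo hi (c, c) := by
  refine ⟨?_, ?_, ?_, ?_, ?_⟩
  · exact h2
  · show lo ≤ c; omega
  · show c ≤ hi; omega
  · show i c = i hi; rw [h2]
  · intro t ht1 ht2
    exact absurd (show t < c from ht2) (by omega)

lemma pair_lbox {i : ℤ → I} {lo hi c : ℤ} (h1 : lo = c) (h2 : c = hi) :
    IsLBox i lo hi (c, c) := by
  refine ⟨?_, ?_, ?_, ?_, ?_⟩
  · exact h1.symm
  · show lo ≤ c; omega
  · show c ≤ hi; omega
  · show i c = i lo; rw [h1]
  · intro t ht1 ht2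
    have h3 : c < t := ht1
    exact absurd (show t ≤ hi from ht2) (by omega)

lemma rbox_next {i : ℤ → I} {a b : ℤ} {p : ℤ × ℤ} (hcol : i a = i b)
    (h : IsRBox i (a+1) b p) : ∃ x', NextSame i a x' ∧ p = (x', b) := by
  obtain ⟨h1, h2, h3, h4, h5⟩ := h
  refine ⟨p.1, ⟨by omega, by rw [h4, hcol], ?_⟩, Prod.ext rfl h1⟩
  intro t ht1 ht2
  rw [hcol]
  exact h5 t (by omega) ht2

lemma lbox_prev {i : ℤ → I} {a b : ℤ} {p : ℤ × ℤ} (hcol : i a = i b)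
    (h : IsLBox i a (b-1) p) : ∃ y', PrevSame i b y' ∧ p = (a, y') := by
  obtain ⟨h1, h2, h3, h4, h5⟩ := h
  refine ⟨p.2, ⟨by omega, by rw [h4, hcol], ?_⟩, Prod.ext h1 rfl⟩
  intro t ht1 ht2
  rw [← hcol]
  exact h5 t ht1 (by omega)

/-- The key structural lemma: if `𝔠̃_{k₀} = [a+1, b]` and `𝔠̃'_{k₀} = [a, b-1]`
(with common envelope `𝔠̃_{k₀+1} = [a, b]`), we identify all four boxes at
positions `k₀` and `k₀ + 1`. -/
lemma key_boxes (l : ℕ) (i : ℤ → I) (C C' : AdmissibleChain i l) (k₀ : ℕ)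
    (h1 : 1 ≤ k₀) (h2 : k₀ < l)
    (hsame : ∀ k : ℕ, k ≠ k₀ → C'.lo k = C.lo k ∧ C'.hi k = C.hi k)
    (hCk : C.lo k₀ = C.lo (k₀+1) + 1 ∧ C.hi k₀ = C.hi (k₀+1))
    (hC'k : C'.lo k₀ = C.lo (k₀+1) ∧ C'.hi k₀ = C.hi (k₀+1) - 1) :
    IsRBox i (C.lo (k₀+1) + 1) (C.hi (k₀+1)) (C.box k₀) ∧
    IsLBox i (C.lo (k₀+1)) (C.hi (k₀+1) - 1) (C'.box k₀) ∧
    IsLBox i (C.lo (k₀+1)) (C.hi (k₀+1)) (C.box (k₀+1)) ∧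
    IsRBox i (C.lo (k₀+1)) (C.hi (k₀+1)) (C'.box (k₀+1)) := by
  have hs1 := hsame (k₀+1) (by omega)
  -- box 𝔠_{k₀+1}
  have hBoxC1 : IsLBox i (C.lo (k₀+1)) (C.hi (k₀+1)) (C.box (k₀+1)) :=
    box_L_of_left C h1 h2 ⟨by omega, by omega⟩
  -- box 𝔠'_{k₀+1}
  have hBoxC'1 : IsRBox i (C.lo (k₀+1)) (C.hi (k₀+1)) (C'.box (k₀+1)) := by
    have := box_R_of_right C' h1 h2 ⟨by omega, by omega⟩
    rwa [hs1.1, hs1.2] at this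
  refine ⟨?_, ?_, hBoxC1, hBoxC'1⟩
  · -- IsRBox i (a+1) b (C.box k₀)
    rcases Nat.lt_or_ge k₀ 2 with hk | hk
    · have hk1 : k₀ = 1 := by omega
      subst hk1
      have hszC := C.size 1 le_rfl (by omega)
      push_cast at hszC
      rw [box_one C (by omega)]
      exact pair_rbox (by omega) (by omega)
    · obtain ⟨m, rfl⟩ : ∃ m, k₀ = m + 1 := ⟨k₀ - 1, by omega⟩
      have hm1 : 1 ≤ m := by omega
      have hs0 := hsame m (by omega)
      rcases C.step m hm1 (by omega) with h | h
      · exfalso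
        rcases C'.step m hm1 (by omega) with h' | h' <;> omega
      · have hB := box_R_of_right C hm1 (by omega) h
        rwa [hCk.1, hCk.2] at hB
  · -- IsLBox i a (b-1) (C'.box k₀)
    rcases Nat.lt_or_ge k₀ 2 with hk | hk
    · have hk1 : k₀ = 1 := by omega
      subst hk1
      have hszC' := C'.size 1 le_rfl (by omega)
      push_cast at hszC'
      rw [box_one C' (by omega)]
      exact pair_lbox (by omega) (by omega)
    · obtain ⟨m, rfl⟩ : ∃ m, k₀ = m + 1 := ⟨k₀ - 1, by omega⟩
      have hm1 : 1 ≤ m := by omega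
      have hs0 := hsame m (by omega)
      rcases C.step m hm1 (by omega) with h | h
      · exfalso
        rcases C'.step m hm1 (by omega) with h' | h' <;> omega
      · have hB := box_L_of_left C' hm1 (by omega) ⟨by omega, by omega⟩
        rwa [hC'k.1, hC'k.2] at hB

lemma other_boxes (l : ℕ) (i : ℤ → I) (C C' : AdmissibleChain i l) (k₀ : ℕ)
    (hsame : ∀ k : ℕ, k ≠ k₀ → C'.lo k = C.lo k ∧ C'.hi k = C.hi k) :
    ∀ k : ℕ, 1 ≤ k → k ≤ l → k ≠ k₀ → k ≠ k₀ + 1 → C'.box k = C.box k := by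
  intro k hk1 hkl hk2 hk3
  rcases Nat.lt_or_ge k 2 with hk | hk
  · have : k = 1 := by omega
    subst this
    rw [box_one C' (by omega), box_one C (by omega), (hsame 1 hk2).1]
  · obtain ⟨m, rfl⟩ : ∃ m, k = m + 1 := ⟨k - 1, by omega⟩
    have hm1 : 1 ≤ m := by omega
    have hs1 := hsame m (by omega)
    have hs2 := hsame (m+1) hk2
    rcases C.step m hm1 (by omega) with h | h
    · have hC := box_L_of_left C hm1 (by omega) h
      have hC' := box_L_of_left C' hm1 (by omega) ⟨by omega, by omega⟩
      rw [hs2.1, hs2.2] at hC'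
      exact lbox_unique hC' hC
    · have hC := box_R_of_right C hm1 (by omega) h
      have hC' := box_R_of_right C' hm1 (by omega) ⟨by omega, by omega⟩
      rw [hs2.1, hs2.2] at hC'
      exact rbox_unique hC' hC

/-- The effect of a box move `B_{k₀}` on the boxes of an admissible chain. -/
theorem box_move (l : ℕ) (i : ℤ → I) (C C' : AdmissibleChain i l) (k₀ : ℕ)
    (h1 : 1 ≤ k₀) (h2 : k₀ < l)
    (hsame : ∀ k : ℕ, k ≠ k₀ → C'.lo k = C.lo k ∧ C'.hi k = C.hi k)
    (hmove : (C'.lo k₀ = C.lo k₀ + 1 ∧ C'.hi k₀ = C.hi k₀ + 1) ∨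
             (C'.lo k₀ = C.lo k₀ - 1 ∧ C'.hi k₀ = C.hi k₀ - 1)) :
    (i (C.lo (k₀ + 1)) = i (C.hi (k₀ + 1)) →
      (C.lo k₀ = C.lo (k₀ + 1) + 1 →
        (∃ x', NextSame i (C.lo (k₀ + 1)) x' ∧ C.box k₀ = (x', C.hi (k₀ + 1))) ∧
        (∃ y', PrevSame i (C.hi (k₀ + 1)) y' ∧ C'.box k₀ = (C.lo (k₀ + 1), y'))) ∧
      (C.lo k₀ = C.lo (k₀ + 1) →
        (∃ y', PrevSame i (C.hi (k₀ + 1)) y' ∧ C.box k₀ = (C.lo (k₀ + 1), y')) ∧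
        (∃ x', NextSame i (C.lo (k₀ + 1)) x' ∧ C'.box k₀ = (x', C.hi (k₀ + 1))))) ∧
    (i (C.lo (k₀ + 1)) ≠ i (C.hi (k₀ + 1)) →
      C'.box k₀ = C.box (k₀ + 1) ∧ C'.box (k₀ + 1) = C.box k₀ ∧
      ∀ k : ℕ, 1 ≤ k → k ≤ l → k ≠ k₀ → k ≠ k₀ + 1 → C'.box k = C.box k) := by
  have hs1 := hsame (k₀+1) (by omega)
  have hstepC := C.step k₀ h1 h2
  have hstepC' := C'.step k₀ h1 h2
  rcases hstepC with hA | hB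
  · -- Case A : 𝔠̃_{k₀} = [a+1, b]
    have hmv : C'.lo k₀ = C.lo k₀ - 1 ∧ C'.hi k₀ = C.hi k₀ - 1 := by
      rcases hmove with h | h
      · exfalso; rcases hstepC' with h' | h' <;> omega
      · exact h
    have hCk : C.lo k₀ = C.lo (k₀+1) + 1 ∧ C.hi k₀ = C.hi (k₀+1) := ⟨by omega, by omega⟩
    have hC'k : C'.lo k₀ = C.lo (k₀+1) ∧ C'.hi k₀ = C.hi (k₀+1) - 1 := ⟨by omega, by omega⟩
    obtain ⟨hRk, hLk', hL1, hR1⟩ := key_boxes l i C C' k₀ h1 h2 hsame hCk hC'k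
    constructor
    · intro hcol
      constructor
      · intro _
        exact ⟨rbox_next hcol hRk, lbox_prev hcol hLk'⟩
      · intro h
        exact absurd h (by omega)
    · intro hne
      exact ⟨lbox_unique hLk' (lbox_shrink hne hL1),
        rbox_unique (rbox_shrink hne hR1) hRk, other_boxes l i C C' k₀ hsame⟩
  · -- Case B : 𝔠̃_{k₀} = [a, b-1]
    have hmv : C'.lo k₀ = C.lo k₀ + 1 ∧ C'.hi k₀ = C.hi k₀ + 1 := by
      rcases hmove with h | h
      · exact h
      · exfalso; rcases hstepC' with h' | h' <;> omega
    have hsame' : ∀ k : ℕ, k ≠ k₀ → C.lo k = C'.lo k ∧ C.hi k = C'.hi k :=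
      fun k hk => ⟨(hsame k hk).1.symm, (hsame k hk).2.symm⟩
    have hCk' : C'.lo k₀ = C'.lo (k₀+1) + 1 ∧ C'.hi k₀ = C'.hi (k₀+1) := ⟨by omega, by omega⟩
    have hC'k' : C.lo k₀ = C'.lo (k₀+1) ∧ C.hi k₀ = C'.hi (k₀+1) - 1 := ⟨by omega, by omega⟩
    obtain ⟨hRk', hLk, hL1', hR1'⟩ := key_boxes l i C' C k₀ h1 h2 hsame' hCk' hC'k'
    rw [hs1.1, hs1.2] at hRk' hLk hL1' hR1'
    constructor
    · intro hcol
      constructor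
      · intro h
        exact absurd h (by omega)
      · intro _
        exact ⟨lbox_prev hcol hLk, rbox_next hcol hRk'⟩
    · intro hne
      exact ⟨rbox_unique hRk' (rbox_shrink hne hR1'),
        lbox_unique (lbox_shrink hne hL1') hLk, other_boxes l i C C' k₀ hsame⟩

end IBoxes
end
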